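/- arXiv:2307.09295 — 2 statements merged into one kernel-verified Lean document; each statement's English description precedes it below -/
import Mathlib

section
/- Fix a real p ∈ (0,1) and an integer K ≥ 2. Define μ_m = 1/(K−1+p) for m ∈ {1,…,K−2} and μ_{K−1} = (1+p)/(K−1+p). Then Σ_{m=1}^{K−1} μ_m = 1, and for every subset S ⊆ {1,…,K} with |S| ≥ 2: Σ_{m=1}^{K−1} μ_m·d_S(σ̂_m) ≤ log(1/p)·(1−p)/(K−1+p). -/
/-- Ordinal Attraction choice probability of item `i` from display set `S`
under the ranking `σ`. -/
noncomputable def oa {K : ℕ} (p : ℝ) (σ : Equiv.Perm (Fin K))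
    (S : Finset (Fin K)) (i : Fin K) : ℝ :=
  (1 - p) * p ^ ((S.filter fun j => σ j ≤ σ i).card - 1) / (1 - p ^ S.card)

/-- `d_S(σ)`: KL divergence on `S` between the OA model with the identity
ranking and the OA model with ranking `σ`. -/
noncomputable def dS {K : ℕ} (p : ℝ) (S : Finset (Fin K)) (σ : Equiv.Perm (Fin K)) : ℝ :=
  ∑ i ∈ S, oa p 1 S i * Real.log (oa p 1 S i / oa p σ S i)

/-- The adjacent transposition `σ̂_m` swapping (0-indexed) items `m` and `m+1`. -/
def adjSwap (K : ℕ) (m : ℕ) : Equiv.Perm (Fin K) :=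
  if h : m + 1 < K then Equiv.swap ⟨m, Nat.lt_of_succ_lt h⟩ ⟨m + 1, h⟩ else 1


/-!
A swap that maps `S` to itself merely permutes the OA probabilities, so `d_S(σ̂_m)` vanishes unless
`m` and `m + 1` both lie in `S`; if `m` then has `r` predecessors in `S`,
`d_S(σ̂_m) = c log(1/p) (pʳ - pʳ⁺¹)` with `c = (1-p)/(1-p^|S|)`. With `q m = p ^ #{j ∈ S | j < m}`
this gives `d_S(σ̂_m) ≤ c log(1/p) (q m - q (m+1))` and
`p d_S(σ̂_m) ≤ c log(1/p) (q (m+1) - q (m+2))`. The weighted sum is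
`(∑ₘ d_S(σ̂_m) + p d_S(σ̂_{K-2})) / (K-1+p)`, so the bounds telescope to
`c log(1/p) (q 0 - q K) = (1-p) log(1/p)`.
-/

open Finset

lemma sum_ite_div_mul {ι : Type*} [DecidableEq ι] {s : Finset ι} {k : ι} (hk : k ∈ s)
    (p D : ℝ) (x : ι → ℝ) :
    ∑ m ∈ s, (if m = k then (1 + p) / D else 1 / D) * x m =
      (∑ m ∈ s, x m + p * x k) / D := by
  have hsplit : ∀ m ∈ s, (if m = k then (1 + p) / D else 1 / D) * x m
      = x m / D + if m = k then p * x k / D else 0 := by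
    intro m _
    split_ifs with h
    · subst h; ring
    · ring
  rw [sum_congr rfl hsplit, sum_add_distrib, sum_ite_eq' s k, if_pos hk, ← sum_div, add_div]

lemma mul_log_div_self (x : ℝ) : x * Real.log (x / x) = 0 := by
  rcases eq_or_ne x 0 with rfl | hx
  · rw [zero_mul]
  · rw [div_self hx, Real.log_one, mul_zero]

namespace OrdinalAttraction

variable {K : ℕ} {p : ℝ} {S : Finset (Fin K)}

lemma oa_eq_of_invariant {σ : Equiv.Perm (Fin K)} (hσ : ∀ i ∈ S, σ i ∈ S) (i : Fin K) :
    oa p σ S i = oa p 1 S (σ i) := by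
  have hS : S.map σ.toEmbedding = S :=
    map_eq_of_subset fun _ hj => by
      obtain ⟨i, hi, rfl⟩ := mem_map.mp hj
      exact hσ i hi
  unfold oa
  congr 4
  conv_rhs => rw [← hS, filter_map, card_map]
  rfl

lemma dS_eq_sum_of_invariant {σ : Equiv.Perm (Fin K)} (hσ : ∀ i ∈ S, σ i ∈ S) :
    dS p S σ = ∑ i ∈ S, oa p 1 S i * Real.log (oa p 1 S i / oa p 1 S (σ i)) := by
  simp only [dS, oa_eq_of_invariant hσ]

lemma dS_eq_zero_of_le_iff {σ : Equiv.Perm (Fin K)}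
    (hσ : ∀ i ∈ S, ∀ j ∈ S, σ j ≤ σ i ↔ j ≤ i) : dS p S σ = 0 := by
  refine sum_eq_zero fun i hi => ?_
  have hoa : oa p σ S i = oa p 1 S i := by
    unfold oa
    rw [filter_congr fun j hj => hσ i hi j hj]
    rfl
  rw [hoa, mul_log_div_self]

lemma dS_swap {a b : Fin K} (ha : a ∈ S) (hb : b ∈ S) (hab : a ≠ b) :
    dS p S (Equiv.swap a b) =
      (oa p 1 S a - oa p 1 S b) * Real.log (oa p 1 S a / oa p 1 S b) := by
  have hσ : ∀ i ∈ S, Equiv.swap a b i ∈ S := by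
    intro i hi
    rw [Equiv.swap_apply_def]
    split_ifs <;> assumption
  have hpair : ({a, b} : Finset (Fin K)) ⊆ S := insert_subset ha (singleton_subset_iff.mpr hb)
  have hrest : ∀ i ∈ S, i ∉ ({a, b} : Finset (Fin K)) →
      oa p 1 S i * Real.log (oa p 1 S i / oa p 1 S (Equiv.swap a b i)) = 0 := by
    intro i _ hi
    simp only [mem_insert, mem_singleton, not_or] at hi
    rw [Equiv.swap_apply_of_ne_of_ne hi.1 hi.2, mul_log_div_self]
  rw [dS_eq_sum_of_invariant hσ, ← sum_subset hpair hrest, sum_pair hab,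
    Equiv.swap_apply_left, Equiv.swap_apply_right, ← inv_div, Real.log_inv]
  ring

lemma swap_le_swap_iff_of_succ {a b i j : Fin K} (hab : (b : ℕ) = a + 1)
    (hij : (i ≠ a ∧ j ≠ a) ∨ (i ≠ b ∧ j ≠ b)) :
    Equiv.swap a b j ≤ Equiv.swap a b i ↔ j ≤ i := by
  simp only [Equiv.swap_apply_def]
  split_ifs <;> simp only [Fin.le_def, Fin.ext_iff, ne_eq] at * <;> omega

def numBelow (S : Finset (Fin K)) (m : ℕ) : ℕ := (S.filter fun j : Fin K => (j : ℕ) < m).card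

lemma numBelow_mono : Monotone (numBelow S) :=
  fun _ _ h => card_le_card fun j hj => by
    simp only [mem_filter] at hj ⊢
    exact ⟨hj.1, hj.2.trans_le h⟩

lemma numBelow_zero : numBelow S 0 = 0 := by
  simp [numBelow]

lemma numBelow_eq_card : numBelow S K = S.card := by
  simp [numBelow]

lemma numBelow_succ_of_mem {i : Fin K} (hi : i ∈ S) : numBelow S (i + 1) = numBelow S i + 1 := by
  have hset : (S.filter fun j : Fin K => (j : ℕ) < i + 1) =
      insert i (S.filter fun j : Fin K => (j : ℕ) < i) := by
    ext j
    simp only [mem_filter, mem_insert, Fin.ext_iff]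
    constructor
    · rintro ⟨hj, hji⟩
      rcases Nat.lt_succ_iff_lt_or_eq.mp hji with h | h
      · exact Or.inr ⟨hj, h⟩
      · exact Or.inl h
    · rintro (h | ⟨hj, hji⟩)
      · exact ⟨Fin.ext h ▸ hi, by omega⟩
      · exact ⟨hj, by omega⟩
  rw [numBelow, hset, card_insert_of_notMem (by simp)]
  rfl

lemma oa_one_of_mem {i : Fin K} (hi : i ∈ S) :
    oa p 1 S i = (1 - p) * p ^ numBelow S i / (1 - p ^ S.card) := by
  have hrank : (S.filter fun j => (1 : Equiv.Perm (Fin K)) j ≤ (1 : Equiv.Perm (Fin K)) i).card =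
      numBelow S (i + 1) := by
    simp only [numBelow, Equiv.Perm.one_apply, Fin.le_def, Nat.lt_succ_iff]
  rw [oa, hrank, numBelow_succ_of_mem hi, Nat.add_sub_cancel]

variable (p) in
noncomputable def klScale (S : Finset (Fin K)) : ℝ :=
  (1 - p) * Real.log (1 / p) / (1 - p ^ S.card)

lemma klScale_nonneg (hp0 : 0 < p) (hp1 : p < 1) (hS : S.Nonempty) : 0 ≤ klScale p S := by
  have hpow : p ^ S.card < 1 := pow_lt_one₀ hp0.le hp1 (card_ne_zero.mpr hS)
  have hlog : 0 ≤ Real.log (1 / p) := Real.log_nonneg (one_le_one_div hp0 hp1.le)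
  exact div_nonneg (mul_nonneg (by linarith) hlog) (by linarith)

lemma dS_swap_of_succ (hp0 : 0 < p) (hp1 : p < 1) {a b : Fin K} (hab : (b : ℕ) = a + 1)
    (ha : a ∈ S) (hb : b ∈ S) :
    dS p S (Equiv.swap a b) = klScale p S * (p ^ numBelow S a - p ^ (numBelow S a + 1)) := by
  have hden : 1 - p ^ S.card ≠ 0 :=
    (sub_pos.mpr (pow_lt_one₀ hp0.le hp1 (card_ne_zero.mpr ⟨a, ha⟩))).ne'
  have hfa : oa p 1 S a ≠ 0 := by
    rw [oa_one_of_mem ha]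
    exact div_ne_zero (mul_ne_zero (sub_ne_zero.mpr hp1.ne') (pow_ne_zero _ hp0.ne')) hden
  have hfb : oa p 1 S b = oa p 1 S a * p := by
    rw [oa_one_of_mem ha, oa_one_of_mem hb, hab, numBelow_succ_of_mem ha, pow_succ]
    ring
  rw [dS_swap ha hb (fun h => by simp [h] at hab), hfb, div_mul_cancel_left₀ hfa, ← one_div,
    oa_one_of_mem ha, klScale]
  field_simp
  ring

lemma dS_adjSwap_eq_zero_or (hp0 : 0 < p) (hp1 : p < 1) (m : ℕ) :
    dS p S (adjSwap K m) = 0 ∨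
      (numBelow S (m + 1) = numBelow S m + 1 ∧ numBelow S (m + 2) = numBelow S m + 2 ∧
        dS p S (adjSwap K m) = klScale p S * (p ^ numBelow S m - p ^ (numBelow S m + 1))) := by
  by_cases hm : m + 1 < K
  swap
  · left
    rw [adjSwap, dif_neg hm]
    exact dS_eq_zero_of_le_iff fun _ _ _ _ => Iff.rfl
  set a : Fin K := ⟨m, Nat.lt_of_succ_lt hm⟩
  set b : Fin K := ⟨m + 1, hm⟩
  rw [adjSwap, dif_pos hm]
  by_cases hab : a ∈ S ∧ b ∈ S
  · right
    have hna : numBelow S (m + 1) = numBelow S m + 1 := numBelow_succ_of_mem hab.1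
    have hnb : numBelow S (m + 2) = numBelow S (m + 1) + 1 := numBelow_succ_of_mem hab.2
    exact ⟨hna, by rw [hnb, hna], dS_swap_of_succ hp0 hp1 rfl hab.1 hab.2⟩
  · left
    refine dS_eq_zero_of_le_iff fun i hi j hj => swap_le_swap_iff_of_succ rfl ?_
    by_cases ha : a ∈ S
    · exact Or.inr
        ⟨fun h => hab ⟨ha, by subst h; exact hi⟩, fun h => hab ⟨ha, by subst h; exact hj⟩⟩
    · exact Or.inl ⟨fun h => ha (by subst h; exact hi), fun h => ha (by subst h; exact hj)⟩

lemma dS_adjSwap_le (hp0 : 0 < p) (hp1 : p < 1) (hS : S.Nonempty) (m : ℕ) :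
    dS p S (adjSwap K m) ≤ klScale p S * (p ^ numBelow S m - p ^ numBelow S (m + 1)) := by
  rcases dS_adjSwap_eq_zero_or hp0 hp1 m with h | ⟨hna, -, h⟩
  · rw [h]
    refine mul_nonneg (klScale_nonneg hp0 hp1 hS) (sub_nonneg.mpr ?_)
    exact pow_le_pow_of_le_one hp0.le hp1.le (numBelow_mono (Nat.le_succ m))
  · rw [h, hna]

lemma mul_dS_adjSwap_le (hp0 : 0 < p) (hp1 : p < 1) (hS : S.Nonempty) (m : ℕ) :
    p * dS p S (adjSwap K m) ≤
      klScale p S * (p ^ numBelow S (m + 1) - p ^ numBelow S (m + 2)) := by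
  rcases dS_adjSwap_eq_zero_or hp0 hp1 m with h | ⟨hna, hnb, h⟩
  · rw [h, mul_zero]
    refine mul_nonneg (klScale_nonneg hp0 hp1 hS) (sub_nonneg.mpr ?_)
    exact pow_le_pow_of_le_one hp0.le hp1.le (numBelow_mono (Nat.le_succ (m + 1)))
  · rw [h, hna, hnb]
    exact le_of_eq (by ring)

end OrdinalAttraction

open OrdinalAttraction in
/-- Dual feasibility (Lemma EC.8): the weights `μ_m = 1/(K−1+p)` for
`m ∈ {0,…,K−3}` and `μ_{K−2} = (1+p)/(K−1+p)` (0-indexed adjacent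
transpositions) sum to one, and for every display set `S` of size `≥ 2` one has
`∑_m μ_m·d_S(σ̂_m) ≤ log(1/p)·(1−p)/(K−1+p)`. -/
theorem stmt8 (p : ℝ) (hp0 : 0 < p) (hp1 : p < 1) (K : ℕ) (hK : 2 ≤ K) :
    (∑ m ∈ Finset.range (K - 1),
        (if m = K - 2 then (1 + p) / ((K : ℝ) - 1 + p)
         else 1 / ((K : ℝ) - 1 + p))) = 1
    ∧ ∀ S : Finset (Fin K), 2 ≤ S.card →
        (∑ m ∈ Finset.range (K - 1),
            (if m = K - 2 then (1 + p) / ((K : ℝ) - 1 + p)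
             else 1 / ((K : ℝ) - 1 + p)) * dS p S (adjSwap K m))
          ≤ Real.log (1 / p) * (1 - p) / ((K : ℝ) - 1 + p) := by
  have hD : 0 < (K : ℝ) - 1 + p := by
    have : (2 : ℝ) ≤ K := by exact_mod_cast hK
    linarith
  have hlast : K - 2 ∈ range (K - 1) := mem_range.mpr (by omega)
  refine ⟨?_, fun S hS => ?_⟩
  · have h := sum_ite_div_mul hlast p ((K : ℝ) - 1 + p) fun _ => 1
    simp only [mul_one, sum_const, card_range, nsmul_eq_mul] at h
    rw [h, Nat.cast_sub (by omega), Nat.cast_one, div_self hD.ne']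
  · have hSne : S.Nonempty := card_pos.mp (by omega)
    have hden : 1 - p ^ S.card ≠ 0 := (sub_pos.mpr (pow_lt_one₀ hp0.le hp1 (by omega))).ne'
    rw [sum_ite_div_mul hlast]
    refine div_le_div_of_nonneg_right ?_ hD.le
    calc ∑ m ∈ range (K - 1), dS p S (adjSwap K m) + p * dS p S (adjSwap K (K - 2))
        ≤ ∑ m ∈ range (K - 1), klScale p S * (p ^ numBelow S m - p ^ numBelow S (m + 1))
          + klScale p S * (p ^ numBelow S (K - 2 + 1) - p ^ numBelow S (K - 2 + 2)) :=
          add_le_add (sum_le_sum fun m _ => dS_adjSwap_le hp0 hp1 hSne m)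
            (mul_dS_adjSwap_le hp0 hp1 hSne (K - 2))
      _ = klScale p S * (p ^ numBelow S 0 - p ^ numBelow S K) := by
          rw [← mul_sum, sum_range_sub', show K - 2 + 1 = K - 1 by omega,
            show K - 2 + 2 = K by omega]
          ring
      _ = Real.log (1 / p) * (1 - p) := by
          rw [numBelow_zero, numBelow_eq_card, klScale, pow_zero]
          field_simp
end

section
/- Fix a real p ∈ (0,1) and an integer K ≥ 2. Let f^{OA} be the OA preference with identity ranking, i.e., f^{OA}(i|S) = (1−p)·p^{r−1}/(1−p^{|S|}) with r = |{j ∈ S : j ≤ i}|, for each S ∈ 𝒮 and i ∈ S. Then the supremum, over all probability distributions λ on 𝒮 (λ : 𝒮 → [0,∞) with Σ_{S∈𝒮} λ(S) = 1), of the infimum over all preferences f' ∈ M_p whose ranking σ_{f'} is not the identity of D_λ(f^{OA} ‖ f'), is at most log(1/p)·(1−p)/(K−1+p). -/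
/-!
The alternatives are the OA preferences whose ranking swaps two neighbours `i, i + 1`. On a
display set `S` such a swap changes nothing unless both neighbours lie in `S`, and then it
costs `(1 - p) log(1/p) f^{OA}(i|S)`, where `f^{OA}(i|S)` is `(1 - p) / (1 - p^{|S|})` times
`p` to the rank of `i` in `S`. Give every swap weight `1`, except the last one (of `K - 2`
and `K - 1`), which gets weight `1 + p`. The lower neighbours have distinct ranks below
`|S| - 1`, and the extra weight `p` on the last swap supplies the missing term `p^{|S| - 1}`,
so on each `S` the weighted costs add up to at most `(1 - p) log(1/p)` times a geometric sum
`∑_{j < |S|} p^j = (1 - p^{|S|}) / (1 - p)`. The weights total `K - 1 + p`, so for every `λ`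
some swap has divergence `D_λ` at most `J^{OA}`.
-/

open Finset

theorem Finset.sum_card_filter_lt {α M : Type*} [LinearOrder α] [AddCommMonoid M]
    (g : ℕ → M) (T : Finset α) :
    ∑ x ∈ T, g #{y ∈ T | y < x} = ∑ j ∈ range #T, g j := by
  induction T using Finset.induction_on_max with
  | empty => simp
  | insert a s ha ih =>
    have hnot : a ∉ s := fun h => lt_irrefl a (ha a h)
    have htop : {y ∈ insert a s | y < a} = s := by
      rw [filter_insert, if_neg (lt_irrefl a), filter_true_of_mem ha]
    have hrest : ∀ x ∈ s, {y ∈ insert a s | y < x} = {y ∈ s | y < x} := fun x hx => by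
      rw [filter_insert, if_neg (ha x hx).not_gt]
    rw [sum_insert hnot, card_insert_of_notMem hnot, sum_range_succ, htop,
      sum_congr rfl fun x hx => by rw [hrest x hx], ih, add_comm]

theorem Finset.map_swap_eq_self {α : Type*} [DecidableEq α] {S : Finset α} {a b : α}
    (ha : a ∈ S) (hb : b ∈ S) : S.map (Equiv.swap a b).toEmbedding = S := by
  ext j
  rw [mem_map_equiv, Equiv.symm_swap, Equiv.swap_apply_def]
  split_ifs with h1 h2 <;> simp_all

-- The hypothesis `0 ≤ a` covers the junk value `sInf s = 0` of a set unbounded below.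
theorem Real.sInf_le_of_mem_of_le {s : Set ℝ} {x a : ℝ} (hx : x ∈ s) (hxa : x ≤ a)
    (ha : 0 ≤ a) : sInf s ≤ a := by
  by_cases hs : BddBelow s
  · exact (csInf_le hs hx).trans hxa
  · rwa [Real.sInf_of_not_bddBelow hs]

section OrdinalAttraction

variable {K n : ℕ} {p : ℝ}

theorem filter_le_perm_eq_insert (σ : Equiv.Perm (Fin K)) {S : Finset (Fin K)} {i : Fin K}
    (hi : i ∈ S) : {j ∈ S | σ j ≤ σ i} = insert i {j ∈ S | σ j < σ i} := by
  ext j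
  simp only [mem_filter, mem_insert, le_iff_lt_or_eq, σ.injective.eq_iff]
  constructor
  · rintro ⟨hj, hlt | rfl⟩
    · exact Or.inr ⟨hj, hlt⟩
    · exact Or.inl rfl
  · rintro (rfl | ⟨hj, hlt⟩)
    · exact ⟨hi, Or.inr rfl⟩
    · exact ⟨hj, Or.inl hlt⟩

theorem oa_eq_of_mem (σ : Equiv.Perm (Fin K)) {S : Finset (Fin K)} {i : Fin K} (hi : i ∈ S) :
    oa p σ S i = (1 - p) * p ^ #{j ∈ S | σ j < σ i} / (1 - p ^ #S) := by
  rw [oa, filter_le_perm_eq_insert σ hi, card_insert_of_notMem (by simp), Nat.add_sub_cancel]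

theorem oa_one_eq_of_mem {S : Finset (Fin K)} {i : Fin K} (hi : i ∈ S) :
    oa p 1 S i = (1 - p) * p ^ #{j ∈ S | j < i} / (1 - p ^ #S) :=
  oa_eq_of_mem 1 hi

theorem one_sub_pow_card_pos (hp0 : 0 ≤ p) (hp1 : p < 1) {S : Finset (Fin K)}
    (hS : S.Nonempty) : 0 < 1 - p ^ #S := by
  have := pow_lt_one₀ hp0 hp1 hS.card_pos.ne'
  linarith

theorem oa_pos (hp0 : 0 < p) (hp1 : p < 1) (σ : Equiv.Perm (Fin K)) {S : Finset (Fin K)}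
    {i : Fin K} (hi : i ∈ S) : 0 < oa p σ S i := by
  have hD := one_sub_pow_card_pos hp0.le hp1 ⟨i, hi⟩
  have h1p : 0 < 1 - p := by linarith
  unfold oa
  positivity

theorem sum_oa (hp0 : 0 ≤ p) (hp1 : p < 1) (σ : Equiv.Perm (Fin K)) {S : Finset (Fin K)}
    (hS : S.Nonempty) : ∑ i ∈ S, oa p σ S i = 1 := by
  have hranks : ∑ i ∈ S, p ^ #{j ∈ S | σ j < σ i} = ∑ j ∈ range #S, p ^ j := by
    rw [← card_map σ.toEmbedding, ← sum_card_filter_lt, sum_map]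
    refine sum_congr rfl fun i _ => ?_
    rw [filter_map, card_map]
    rfl
  have hden := (one_sub_pow_card_pos hp0 hp1 hS).ne'
  rw [sum_congr rfl fun i hi => oa_eq_of_mem σ hi, ← sum_div, ← mul_sum, hranks,
    mul_comm, geom_sum_mul_neg, div_self hden]

theorem oa_le_mul_oa (hp0 : 0 < p) (hp1 : p < 1) (σ : Equiv.Perm (Fin K))
    {S : Finset (Fin K)} {i i' : Fin K} (hi : i ∈ S) (hi' : i' ∈ S) (h : σ i' < σ i) :
    oa p σ S i ≤ p * oa p σ S i' := by
  have hrank : #{j ∈ S | σ j < σ i'} + 1 ≤ #{j ∈ S | σ j < σ i} := by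
    rw [← card_insert_of_notMem (s := {j ∈ S | σ j < σ i'}) (a := i') (by simp),
      ← filter_le_perm_eq_insert σ hi']
    exact card_le_card fun j hj => by
      simp only [mem_filter] at hj ⊢
      exact ⟨hj.1, hj.2.trans_lt h⟩
  have hD := one_sub_pow_card_pos hp0.le hp1 ⟨i, hi⟩
  have h1p : 0 ≤ 1 - p := by linarith
  rw [oa_eq_of_mem σ hi, oa_eq_of_mem σ hi', mul_div_assoc', mul_left_comm, ← pow_succ']
  gcongr ?_ / _
  exact mul_le_mul_of_nonneg_left (pow_le_pow_of_le_one hp0.le hp1.le hrank) h1p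

theorem oa_mul_apply (σ τ : Equiv.Perm (Fin K)) (S : Finset (Fin K)) (i : Fin K) :
    oa p (σ * τ) S i = oa p σ (S.map τ.toEmbedding) (τ i) := by
  simp only [oa, filter_map, card_map, Equiv.Perm.mul_apply]
  rfl

theorem oa_swap_of_mem {S : Finset (Fin K)} {a b : Fin K} (ha : a ∈ S) (hb : b ∈ S)
    (i : Fin K) : oa p (Equiv.swap a b) S i = oa p 1 S (Equiv.swap a b i) := by
  rw [← one_mul (Equiv.swap a b), oa_mul_apply, map_swap_eq_self ha hb, one_mul]

noncomputable def oaKL (p : ℝ) (σ : Equiv.Perm (Fin K)) (S : Finset (Fin K)) : ℝ :=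
  ∑ i ∈ S, oa p 1 S i * Real.log (oa p 1 S i / oa p σ S i)

theorem oaKL_swap_of_mem {S : Finset (Fin K)} {a b : Fin K} (hab : a ≠ b) (ha : a ∈ S)
    (hb : b ∈ S) :
    oaKL p (Equiv.swap a b) S
      = (oa p 1 S a - oa p 1 S b) * Real.log (oa p 1 S a / oa p 1 S b) := by
  have hfixed : ∀ i ∈ S, i ≠ a ∧ i ≠ b →
      oa p 1 S i * Real.log (oa p 1 S i / oa p (Equiv.swap a b) S i) = 0 := by
    rintro i - ⟨hia, hib⟩
    rw [oa_swap_of_mem ha hb, Equiv.swap_apply_of_ne_of_ne hia hib]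
    rcases eq_or_ne (oa p 1 S i) 0 with h | h <;> simp [h]
  rw [oaKL, sum_eq_add_of_mem a b ha hb hab hfixed, oa_swap_of_mem ha hb, oa_swap_of_mem ha hb,
    Equiv.swap_apply_left, Equiv.swap_apply_right, ← inv_div, Real.log_inv]
  ring

theorem oa_succ_eq_mul (i : Fin (n + 1)) {S : Finset (Fin (n + 2))} (hc : i.castSucc ∈ S)
    (hs : i.succ ∈ S) : oa p 1 S i.succ = p * oa p 1 S i.castSucc := by
  have hbelow : {j ∈ S | j < i.succ} = insert i.castSucc {j ∈ S | j < i.castSucc} := by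
    ext j
    simp only [mem_filter, mem_insert, ← Fin.le_castSucc_iff, le_iff_lt_or_eq]
    constructor
    · rintro ⟨hj, hlt | rfl⟩
      · exact Or.inr ⟨hj, hlt⟩
      · exact Or.inl rfl
    · rintro (rfl | ⟨hj, hlt⟩)
      · exact ⟨hc, Or.inr rfl⟩
      · exact ⟨hj, Or.inl hlt⟩
  rw [oa_one_eq_of_mem hc, oa_one_eq_of_mem hs, hbelow, card_insert_of_notMem (by simp), pow_succ]
  ring

theorem swap_le_swap_iff_of_adjacent (i : Fin (n + 1)) {x y : Fin (n + 2)}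
    (hxy : ¬(x = i.castSucc ∧ y = i.succ)) (hyx : ¬(x = i.succ ∧ y = i.castSucc)) :
    Equiv.swap i.castSucc i.succ x ≤ Equiv.swap i.castSucc i.succ y ↔ x ≤ y := by
  simp only [Equiv.swap_apply_def, Fin.ext_iff, Fin.le_def, Fin.val_castSucc, Fin.val_succ] at *
  split_ifs <;> simp only [Fin.val_castSucc, Fin.val_succ] <;> omega

theorem oa_adjacent_swap_of_not_mem (i : Fin (n + 1)) {S : Finset (Fin (n + 2))}
    (hS : ¬(i.castSucc ∈ S ∧ i.succ ∈ S)) {j : Fin (n + 2)} (hj : j ∈ S) :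
    oa p (Equiv.swap i.castSucc i.succ) S j = oa p 1 S j := by
  have hranks : {x ∈ S | Equiv.swap i.castSucc i.succ x ≤ Equiv.swap i.castSucc i.succ j}
      = {x ∈ S | x ≤ j} :=
    filter_congr fun x hx => swap_le_swap_iff_of_adjacent i
      (by rintro ⟨rfl, rfl⟩; exact hS ⟨hx, hj⟩) (by rintro ⟨rfl, rfl⟩; exact hS ⟨hj, hx⟩)
  rw [oa, oa, hranks]
  rfl

theorem oaKL_adjacent_swap (hp0 : 0 < p) (hp1 : p < 1) (i : Fin (n + 1))
    (S : Finset (Fin (n + 2))) :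
    oaKL p (Equiv.swap i.castSucc i.succ) S =
      if i.castSucc ∈ S ∧ i.succ ∈ S then (1 - p) * Real.log (1 / p) * oa p 1 S i.castSucc
      else 0 := by
  split_ifs with hS
  · have hq := (oa_pos hp0 hp1 1 hS.1).ne'
    rw [oaKL_swap_of_mem Fin.castSucc_lt_succ.ne hS.1 hS.2, oa_succ_eq_mul i hS.1 hS.2,
      div_mul_cancel_right₀ hq, ← one_div]
    ring
  · refine sum_eq_zero fun j hj => ?_
    rw [oa_adjacent_swap_of_not_mem i hS hj, div_self (oa_pos hp0 hp1 1 hj).ne', Real.log_one,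
      mul_zero]

theorem sum_adjacent_pow_card_filter_lt_le (hp0 : 0 ≤ p) (hp1 : p ≤ 1)
    (S : Finset (Fin (n + 2))) :
    ∑ i ∈ univ.filter (fun i : Fin (n + 1) => i.castSucc ∈ S ∧ i.succ ∈ S),
        (if i = Fin.last n then 1 + p else 1) * p ^ #{j ∈ S | j < i.castSucc}
      ≤ ∑ j ∈ range #S, p ^ j := by
  set A := univ.filter (fun i : Fin (n + 1) => i.castSucc ∈ S ∧ i.succ ∈ S)
  have hrank : ∀ i ∈ A, #{y ∈ A | y < i} ≤ #{j ∈ S | j < i.castSucc} := fun i _ => by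
    rw [← card_map Fin.castSuccEmb]
    refine card_le_card fun j hj => ?_
    obtain ⟨y, hy, rfl⟩ := mem_map.mp hj
    simp only [A, mem_filter, mem_univ, true_and] at hy
    simpa using ⟨hy.1.1, hy.2⟩
  have hA : A.map Fin.castSuccEmb ⊆ S := fun j hj => by
    obtain ⟨y, hy, rfl⟩ := mem_map.mp hj
    exact (mem_filter.mp hy).2.1
  have hcard : #A ≤ #S := by
    rw [← card_map Fin.castSuccEmb]
    exact card_le_card hA
  have hcard_last (hlast : Fin.last n ∈ A) : #A + 1 ≤ #S := by
    rw [← card_map Fin.castSuccEmb, ← card_insert_of_notMem (a := Fin.last (n + 1)) (by simp)]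
    refine card_le_card (insert_subset ?_ hA)
    rw [← Fin.succ_last]
    exact (mem_filter.mp hlast).2.2
  have hgeom {a b : ℕ} (hab : a ≤ b) : ∑ j ∈ range a, p ^ j ≤ ∑ j ∈ range b, p ^ j :=
    sum_le_sum_of_subset_of_nonneg (range_mono hab) fun j _ _ => pow_nonneg hp0 j
  calc ∑ i ∈ A, (if i = Fin.last n then 1 + p else 1) * p ^ #{j ∈ S | j < i.castSucc}
      ≤ ∑ i ∈ A, (if i = Fin.last n then 1 + p else 1) * p ^ #{y ∈ A | y < i} := by
        refine sum_le_sum fun i hi => mul_le_mul_of_nonneg_left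
          (pow_le_pow_of_le_one hp0 hp1 (hrank i hi)) ?_
        split_ifs <;> linarith
    _ = ∑ i ∈ A, p ^ #{y ∈ A | y < i}
          + ∑ i ∈ A, if i = Fin.last n then p * p ^ #{y ∈ A | y < i} else 0 := by
        rw [← sum_add_distrib]
        refine sum_congr rfl fun i _ => ?_
        split_ifs <;> ring
    _ = ∑ j ∈ range #A, p ^ j + if Fin.last n ∈ A then p ^ #A else 0 := by
        rw [sum_card_filter_lt (p ^ ·), sum_ite_eq']
        congr 1
        split_ifs with hlast
        · have hbelow : {y ∈ A | y < Fin.last n} = A.erase (Fin.last n) := by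
            ext y
            simp [Fin.lt_last_iff_ne_last, and_comm]
          rw [hbelow, card_erase_of_mem hlast, ← pow_succ',
            Nat.sub_add_cancel (card_pos.mpr ⟨_, hlast⟩)]
        · rfl
    _ ≤ ∑ j ∈ range #S, p ^ j := by
        split_ifs with hlast
        · rw [← sum_range_succ]
          exact hgeom (hcard_last hlast)
        · rw [add_zero]
          exact hgeom hcard

theorem sum_weight_mul_oaKL_adjacent_swap_le (hp0 : 0 < p) (hp1 : p < 1)
    {S : Finset (Fin (n + 2))} (hS : S.Nonempty) :
    ∑ i : Fin (n + 1),
        (if i = Fin.last n then 1 + p else 1) * oaKL p (Equiv.swap i.castSucc i.succ) S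
      ≤ (1 - p) * Real.log (1 / p) := by
  have hD := one_sub_pow_card_pos hp0.le hp1 hS
  have hc : 0 ≤ (1 - p) * Real.log (1 / p) * (1 - p) / (1 - p ^ #S) :=
    div_nonneg (mul_nonneg (mul_nonneg (by linarith)
      (Real.log_nonneg (one_le_one_div hp0 hp1.le))) (by linarith)) hD.le
  simp only [oaKL_adjacent_swap hp0 hp1, mul_ite, mul_zero]
  rw [← sum_filter]
  calc ∑ i ∈ univ.filter (fun i : Fin (n + 1) => i.castSucc ∈ S ∧ i.succ ∈ S),
        (if i = Fin.last n then 1 + p else 1) *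
          ((1 - p) * Real.log (1 / p) * oa p 1 S i.castSucc)
      = (1 - p) * Real.log (1 / p) * (1 - p) / (1 - p ^ #S) *
          ∑ i ∈ univ.filter (fun i : Fin (n + 1) => i.castSucc ∈ S ∧ i.succ ∈ S),
            (if i = Fin.last n then 1 + p else 1) * p ^ #{j ∈ S | j < i.castSucc} := by
        rw [mul_sum]
        refine sum_congr rfl fun i hi => ?_
        rw [oa_one_eq_of_mem (mem_filter.mp hi).2.1]
        ring
    _ ≤ (1 - p) * Real.log (1 / p) * (1 - p) / (1 - p ^ #S) * ∑ j ∈ range #S, p ^ j :=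
        mul_le_mul_of_nonneg_left (sum_adjacent_pow_card_filter_lt_le hp0.le hp1.le S) hc
    _ = (1 - p) * Real.log (1 / p) := by
        have hgeom := geom_sum_mul_neg p #S
        field_simp
        linear_combination (1 - p) * Real.log (1 / p) * hgeom

theorem exists_adjacent_swap_divergence_le (hp0 : 0 < p) (hp1 : p < 1)
    (lam : Finset (Fin (n + 2)) → ℝ) (hlam0 : ∀ S : Finset (Fin (n + 2)), 2 ≤ #S → 0 ≤ lam S)
    (hlam1 : ∑ S ∈ univ.filter (fun S : Finset (Fin (n + 2)) => 2 ≤ #S), lam S = 1) :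
    ∃ i : Fin (n + 1),
      ∑ S ∈ univ.filter (fun S : Finset (Fin (n + 2)) => 2 ≤ #S),
          lam S * oaKL p (Equiv.swap i.castSucc i.succ) S
        ≤ Real.log (1 / p) * (1 - p) / (n + 1 + p) := by
  set w : Fin (n + 1) → ℝ := fun i => if i = Fin.last n then 1 + p else 1
  have hw_pos (i : Fin (n + 1)) : 0 < w i := by
    simp only [w]
    split_ifs <;> linarith
  have hw_sum : ∑ i, w i = n + 1 + p := by
    simp [w, Fin.sum_univ_castSucc, Fin.castSucc_ne_last]
    ring
  have havg : ∑ i, w i * ∑ S ∈ univ.filter (fun S : Finset (Fin (n + 2)) => 2 ≤ #S),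
        lam S * oaKL p (Equiv.swap i.castSucc i.succ) S
      ≤ ∑ i, w i * (Real.log (1 / p) * (1 - p) / (n + 1 + p)) :=
    calc _ = ∑ S ∈ univ.filter (fun S : Finset (Fin (n + 2)) => 2 ≤ #S),
          lam S * ∑ i, w i * oaKL p (Equiv.swap i.castSucc i.succ) S := by
          simp only [mul_sum]
          rw [sum_comm]
          refine sum_congr rfl fun S _ => sum_congr rfl fun i _ => by ring
      _ ≤ ∑ S ∈ univ.filter (fun S : Finset (Fin (n + 2)) => 2 ≤ #S),
          lam S * ((1 - p) * Real.log (1 / p)) := by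
          refine sum_le_sum fun S hS => ?_
          have hS2 := (mem_filter.mp hS).2
          exact mul_le_mul_of_nonneg_left
            (sum_weight_mul_oaKL_adjacent_swap_le hp0 hp1 (card_pos.mp (by omega)))
            (hlam0 S hS2)
      _ = _ := by
          rw [← sum_mul, hlam1, ← sum_mul, hw_sum]
          field_simp
  obtain ⟨i, -, hi⟩ := exists_le_of_sum_le univ_nonempty havg
  exact ⟨i, le_of_mul_le_mul_left hi (hw_pos i)⟩

end OrdinalAttraction

/-- Proposition 6: the max-min value
`sup_λ inf_{f' ∈ M_p, σ_{f'} ≠ id} D_λ(f^{OA} ‖ f')` for full-ranking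
identification is at most `J_*^{OA} = log(1/p)·(1−p)/(K−1+p)`.  Here `f^{OA}`
is the OA preference with the identity ranking, the alternatives `f'` range
over the `p`-separable preferences whose ranking `σ` is not the identity, and
`D_λ(f‖f') = ∑_{S∈𝒮} λ(S)·∑_{i∈S} f(i|S)·log(f(i|S)/f'(i|S))`. -/
theorem stmt12 (p : ℝ) (hp0 : 0 < p) (hp1 : p < 1) (K : ℕ) (hK : 2 ≤ K) :
    sSup { v : ℝ | ∃ lam : Finset (Fin K) → ℝ,
        (∀ S : Finset (Fin K), 2 ≤ S.card → 0 ≤ lam S) ∧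
        (∑ S ∈ Finset.univ.filter (fun S : Finset (Fin K) => 2 ≤ S.card), lam S) = 1 ∧
        v = sInf { w : ℝ | ∃ f' : Fin K → Finset (Fin K) → ℝ,
            ∃ σ : Equiv.Perm (Fin K),
            (∀ S : Finset (Fin K), 2 ≤ S.card → ∀ i ∈ S, 0 < f' i S) ∧
            (∀ S : Finset (Fin K), 2 ≤ S.card → ∑ i ∈ S, f' i S = 1) ∧
            (∀ S : Finset (Fin K), 2 ≤ S.card → ∀ i ∈ S, ∀ i' ∈ S,
              σ i' < σ i → f' i S ≤ p * f' i' S) ∧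
            σ ≠ 1 ∧
            w = ∑ S ∈ Finset.univ.filter (fun S : Finset (Fin K) => 2 ≤ S.card),
                  lam S * ∑ i ∈ S, oa p 1 S i * Real.log (oa p 1 S i / f' i S) } }
      ≤ Real.log (1 / p) * (1 - p) / ((K : ℝ) - 1 + p) := by
  obtain ⟨n, rfl⟩ : ∃ n, K = n + 2 := ⟨K - 2, by omega⟩
  have hJ : Real.log (1 / p) * (1 - p) / (((n + 2 : ℕ) : ℝ) - 1 + p)
      = Real.log (1 / p) * (1 - p) / (n + 1 + p) := by
    push_cast
    ring
  have hJ0 : 0 ≤ Real.log (1 / p) * (1 - p) / (n + 1 + p) := by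
    have hL := Real.log_nonneg (one_le_one_div hp0 hp1.le)
    have h1p : 0 ≤ 1 - p := by linarith
    positivity
  rw [hJ]
  refine Real.sSup_le ?_ hJ0
  rintro _ ⟨lam, hlam0, hlam1, rfl⟩
  obtain ⟨i, hi⟩ := exists_adjacent_swap_divergence_le hp0 hp1 lam hlam0 hlam1
  refine Real.sInf_le_of_mem_of_le ⟨fun j S => oa p (Equiv.swap i.castSucc i.succ) S j,
    Equiv.swap i.castSucc i.succ,
    fun S _ j hj => oa_pos hp0 hp1 _ hj,
    fun S hS => sum_oa hp0.le hp1 _ (card_pos.mp (by omega)),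
    fun S _ j hj j' hj' => oa_le_mul_oa hp0 hp1 _ hj hj',
    fun h => Fin.castSucc_lt_succ.ne (Equiv.swap_eq_refl_iff.mp h), rfl⟩ hi hJ0
end
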